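/- Let $\tau_1 \ge \dots \ge \tau_R$, $\mu_1,\dots,\mu_R$, and $\bar\mu$ be reals with $|\mu_1 - \bar\mu| \le \dots \le |\mu_R - \bar\mu|$. Then $\left| \frac{\sum_{r=1}^R e^{\tau_r}\mu_r}{\sum_{r=1}^R e^{\tau_r}} - \bar\mu\right| \le \frac{1}{R}\sum_{r=1}^R |\mu_r - \bar\mu|$. -/

import Mathlib

/-!
By the triangle inequality the deviation of a weighted mean from `μbar` is at most the weighted
mean of the deviations. The weights `exp τ` decrease while the deviations increase, so by
Chebyshev's sum inequality that weighted mean is at most the uniform mean of the deviations.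
-/

open Finset

section WeightedMean

variable {ι α : Type*} [Field α] [LinearOrder α] [IsStrictOrderedRing α]
  {s : Finset ι} {w f : ι → α}

theorem abs_weighted_mean_sub_le (c : α) (hw : ∀ i ∈ s, 0 ≤ w i) (hs : 0 < ∑ i ∈ s, w i) :
    |(∑ i ∈ s, w i * f i) / (∑ i ∈ s, w i) - c| ≤ (∑ i ∈ s, w i * |f i - c|) / ∑ i ∈ s, w i := by
  have hcentre : (∑ i ∈ s, w i * f i) / (∑ i ∈ s, w i) - c
      = (∑ i ∈ s, w i * (f i - c)) / ∑ i ∈ s, w i := by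
    simp only [mul_sub, sum_sub_distrib, ← sum_mul]
    field_simp
  rw [hcentre, abs_div, abs_of_pos hs]
  gcongr
  calc |∑ i ∈ s, w i * (f i - c)| ≤ ∑ i ∈ s, |w i * (f i - c)| := abs_sum_le_sum_abs _ _
    _ = ∑ i ∈ s, w i * |f i - c| :=
      sum_congr rfl fun i hi => by rw [abs_mul, abs_of_nonneg (hw i hi)]

theorem AntivaryOn.weighted_mean_le_mean (hwf : AntivaryOn w f s) (hs : 0 < ∑ i ∈ s, w i) :
    (∑ i ∈ s, w i * f i) / (∑ i ∈ s, w i) ≤ (∑ i ∈ s, f i) / #s := by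
  have hne : s.Nonempty := nonempty_of_sum_ne_zero hs.ne'
  rw [div_le_div_iff₀ hs (by exact_mod_cast hne.card_pos)]
  linarith [hwf.card_mul_sum_le_sum_mul_sum]

end WeightedMean

theorem stmt_4 (R : ℕ) (hR : 0 < R) (τ μ : Fin R → ℝ) (μbar : ℝ)
    (hτ : Antitone τ) (hμ : Monotone fun r => |μ r - μbar|) :
    |(∑ r : Fin R, Real.exp (τ r) * μ r) / (∑ r : Fin R, Real.exp (τ r)) - μbar| ≤
      (1 / (R : ℝ)) * ∑ r : Fin R, |μ r - μbar| := by
  have hanti : Antivary (fun r => Real.exp (τ r)) fun r => |μ r - μbar| :=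
    (Real.exp_monotone.comp_antitone hτ).antivary hμ
  have hpos : 0 < ∑ r : Fin R, Real.exp (τ r) :=
    sum_pos (fun r _ => Real.exp_pos (τ r)) ⟨⟨0, hR⟩, mem_univ _⟩
  calc _ ≤ (∑ r : Fin R, Real.exp (τ r) * |μ r - μbar|) / ∑ r : Fin R, Real.exp (τ r) :=
        abs_weighted_mean_sub_le μbar (fun r _ => (Real.exp_pos (τ r)).le) hpos
    _ ≤ (∑ r : Fin R, |μ r - μbar|) / #(univ : Finset (Fin R)) :=
        (hanti.antivaryOn _).weighted_mean_le_mean hpos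
    _ = _ := by rw [card_univ, Fintype.card_fin, one_div_mul_eq_div]
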